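/- arXiv:1805.12195 — 2 statements merged into one kernel-verified Lean document; each statement's English description precedes it below -/
import Mathlib

section
/- Let ψ: ℝ² → [0,∞) be continuous, convex, 2-homogeneous (ψ(λξ) = λ²ψ(ξ) for λ ≥ 0), and strictly positive on ℝ²\{0}. Let 𝕊 = span_ℤ{b₁,b₂} for linearly independent b₁,b₂ ∈ ℝ². Define φ(ξ) = inf { Σ_{k=1}^M λ_k ψ(ξ_k) : M ∈ ℕ, λ_k ≥ 0, ξ_k ∈ 𝕊, Σ_{k=1}^M λ_k ξ_k = ξ }. Then the infimum in the definition of φ is attained (i.e. it is a minimum). -/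
/-!
Splitting a lattice vector `m b₁ + n b₂` into `|m|` copies of `±b₁` and `|n|` copies of `±b₂`
costs at most `(|m| + |n|) K`, with `K` the largest value of `ψ` at `±b₁, ±b₂`; this is linear
in the coefficients, whereas `ψ (m b₁ + n b₂)` grows quadratically in them by homogeneity and
positivity. Hence for large `N` every admissible decomposition can be replaced, at no extra
cost, by one using only the finitely many nonzero lattice vectors with coefficients in
`[-N, N]`. Over these the problem is a linear program whose cost has positive weights, so its
sublevel sets are compact and the minimum is attained.
-/

open scoped BigOperators

noncomputable section

/-- The lattice `𝕊 = span_ℤ {b₁, b₂}` of admissible Burgers vectors. -/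
def lattice (b₁ b₂ : Fin 2 → ℝ) : Set (Fin 2 → ℝ) :=
  {v | ∃ m n : ℤ, v = (m : ℝ) • b₁ + (n : ℝ) • b₂}

/-- The set of values `Σ λ_k ψ(ξ_k)` over admissible decompositions `Σ λ_k ξ_k = ξ`
with `λ_k ≥ 0` and `ξ_k ∈ 𝕊`. -/
def decompVals (ψ : (Fin 2 → ℝ) → ℝ) (b₁ b₂ : Fin 2 → ℝ) (ξ : Fin 2 → ℝ) : Set ℝ :=
  {s | ∃ (M : ℕ) (lam : Fin M → ℝ) (v : Fin M → (Fin 2 → ℝ)),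
    (∀ k, 0 ≤ lam k) ∧ (∀ k, v k ∈ lattice b₁ b₂) ∧ (∑ k, lam k • v k) = ξ ∧
    s = ∑ k, lam k * ψ (v k)}

open Finset


theorem exists_pos_mul_norm_sq_le {E : Type*} [NormedAddCommGroup E] [NormedSpace ℝ E]
    [FiniteDimensional ℝ E] [Nontrivial E] {f : E → ℝ} (hf : Continuous f)
    (hhom : ∀ (l : ℝ) (x : E), 0 ≤ l → f (l • x) = l ^ 2 * f x)
    (hpos : ∀ x, x ≠ 0 → 0 < f x) :
    ∃ κ > 0, ∀ x, κ * ‖x‖ ^ 2 ≤ f x := by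
  obtain ⟨x₀, hx₀, hmin⟩ := (isCompact_sphere (0 : E) 1).exists_isMinOn
    (NormedSpace.sphere_nonempty.2 zero_le_one) hf.continuousOn
  have hx₀ : ‖x₀‖ = 1 := by simpa using hx₀
  refine ⟨f x₀, hpos x₀ (norm_ne_zero_iff.1 (by simp [hx₀])), fun x => ?_⟩
  rcases eq_or_ne x 0 with rfl | hx
  · simpa using (hhom 0 0 le_rfl).ge
  have hx' : 0 < ‖x‖ := norm_pos_iff.2 hx
  have hu : ‖x‖⁻¹ • x ∈ Metric.sphere (0 : E) 1 := by
    simp [norm_smul, hx'.ne']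
  calc f x₀ * ‖x‖ ^ 2 ≤ ‖x‖ ^ 2 * f (‖x‖⁻¹ • x) := by
        rw [mul_comm]; exact mul_le_mul_of_nonneg_left (hmin hu) (by positivity)
    _ = f (‖x‖ • ‖x‖⁻¹ • x) := (hhom _ _ hx'.le).symm
    _ = f x := by rw [smul_inv_smul₀ hx'.ne']

section NonnegCombinations

variable {ι E : Type*} [Fintype ι]

def nonnegCombinations [AddCommMonoid E] [Module ℝ E] (v : ι → E) (ξ : E) : Set (ι → ℝ) :=
  {μ | 0 ≤ μ ∧ ∑ i, μ i • v i = ξ}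

theorem isClosed_nonnegCombinations [AddCommMonoid E] [Module ℝ E] [TopologicalSpace E]
    [ContinuousAdd E] [ContinuousSMul ℝ E] [T2Space E] (v : ι → E) (ξ : E) :
    IsClosed (nonnegCombinations v ξ) :=
  (isClosed_le continuous_const continuous_id).inter
    (isClosed_eq (by fun_prop) continuous_const)

theorem exists_isMinOn_nonnegCombinations [AddCommMonoid E] [Module ℝ E] [TopologicalSpace E]
    [ContinuousAdd E] [ContinuousSMul ℝ E] [T2Space E] (v : ι → E) {ξ : E} {w : ι → ℝ}
    (hw : ∀ i, 0 < w i) (hne : (nonnegCombinations v ξ).Nonempty) :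
    ∃ μ₀ ∈ nonnegCombinations v ξ,
      IsMinOn (fun μ => ∑ i, μ i * w i) (nonnegCombinations v ξ) μ₀ := by
  obtain ⟨μ₁, hμ₁⟩ := hne
  set cost : (ι → ℝ) → ℝ := fun μ => ∑ i, μ i * w i
  have hcost : Continuous cost := by fun_prop
  set A := nonnegCombinations v ξ ∩ {μ | cost μ ≤ cost μ₁}
  -- A bound on the cost bounds every coefficient, since all weights are positive.
  have hA : A ⊆ Set.univ.pi fun i => Set.Icc 0 (cost μ₁ / w i) := by
    rintro μ ⟨⟨hμ, -⟩, hμc⟩ i -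
    refine ⟨hμ i, (le_div_iff₀ (hw i)).2 (le_trans ?_ hμc)⟩
    exact single_le_sum (f := fun j => μ j * w j) (fun j _ => mul_nonneg (hμ j) (hw j).le)
      (mem_univ i)
  have hAc : IsCompact A := (isCompact_univ_pi fun i => isCompact_Icc).of_isClosed_subset
    ((isClosed_nonnegCombinations v ξ).inter (isClosed_le hcost continuous_const)) hA
  obtain ⟨μ₀, ⟨hμ₀, hμ₀c⟩, hmin⟩ :=
    hAc.exists_isMinOn ⟨μ₁, hμ₁, le_refl (cost μ₁)⟩ hcost.continuousOn
  refine ⟨μ₀, hμ₀, isMinOn_iff.2 fun μ hμ => ?_⟩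
  by_cases h : cost μ ≤ cost μ₁
  · exact isMinOn_iff.1 hmin μ ⟨hμ, h⟩
  · exact hμ₀c.trans (le_of_not_ge h)

theorem exists_nonnegCombinations_sum_le [AddCommMonoid E] [Module ℝ E] {κ : Type*} [Fintype κ]
    {g : ι → E} {ψ : E → ℝ} {L : Set E}
    (h : ∀ v ∈ L, ∃ μ ∈ nonnegCombinations g v, ∑ i, μ i * ψ (g i) ≤ ψ v)
    {lam : κ → ℝ} (hlam : ∀ k, 0 ≤ lam k) {v : κ → E} (hv : ∀ k, v k ∈ L) :
    ∃ μ ∈ nonnegCombinations g (∑ k, lam k • v k),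
      ∑ i, μ i * ψ (g i) ≤ ∑ k, lam k * ψ (v k) := by
  choose μ hμ hμψ using fun k => h (v k) (hv k)
  refine ⟨∑ k, lam k • μ k, ⟨sum_nonneg fun k _ => smul_nonneg (hlam k) (hμ k).1, ?_⟩, ?_⟩
  · simp_rw [Finset.sum_apply, Pi.smul_apply, smul_eq_mul, sum_smul, mul_smul]
    rw [sum_comm]
    simp_rw [← smul_sum, (hμ _).2]
  · simp_rw [Finset.sum_apply, Pi.smul_apply, smul_eq_mul, sum_mul, mul_assoc]
    rw [sum_comm]
    simp_rw [← mul_sum]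
    exact sum_le_sum fun k _ => mul_le_mul_of_nonneg_left (hμψ k) (hlam k)

end NonnegCombinations

theorem sum_pi_single_smul {ι M : Type*} [Fintype ι] [DecidableEq ι] [AddCommMonoid M]
    [Module ℝ M] (j : ι) (c : ℝ) (f : ι → M) : ∑ i, (Pi.single j c : ι → ℝ) i • f i = c • f j := by
  simp [Pi.single_apply, ite_smul]

def latticePoint (b₁ b₂ : Fin 2 → ℝ) (p : ℤ × ℤ) : Fin 2 → ℝ :=
  (p.1 : ℝ) • b₁ + (p.2 : ℝ) • b₂

-- `0` is left out so that every generator has positive cost.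
def latticeBox (N : ℕ) : Finset (ℤ × ℤ) :=
  (Icc (-N : ℤ) N ×ˢ Icc (-N : ℤ) N).erase 0

theorem mem_latticeBox {N : ℕ} {p : ℤ × ℤ} :
    p ∈ latticeBox N ↔ p ≠ 0 ∧ |p.1| ≤ N ∧ |p.2| ≤ N := by
  simp [latticeBox, abs_le]

def boxPoint (b₁ b₂ : Fin 2 → ℝ) (N : ℕ) (i : latticeBox N) : Fin 2 → ℝ :=
  latticePoint b₁ b₂ i

section Box

variable {ψ : (Fin 2 → ℝ) → ℝ} {b₁ b₂ : Fin 2 → ℝ} {N : ℕ}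

theorem exists_unit_combination (hN : 1 ≤ N) (a b : ℝ) :
    ∃ μ ∈ nonnegCombinations (boxPoint b₁ b₂ N) (a • b₁ + b • b₂),
      ∀ ψ : (Fin 2 → ℝ) → ℝ, ∑ i, μ i * ψ (boxPoint b₁ b₂ N i) =
        a⁺ * ψ b₁ + a⁻ * ψ (-b₁) + b⁺ * ψ b₂ + b⁻ * ψ (-b₂) := by
  have hN' : (1 : ℤ) ≤ N := by exact_mod_cast hN
  have h₁ : ((1, 0) : ℤ × ℤ) ∈ latticeBox N := mem_latticeBox.2 ⟨by simp, by simpa, by simp⟩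
  have h₂ : ((-1, 0) : ℤ × ℤ) ∈ latticeBox N := mem_latticeBox.2 ⟨by simp, by simpa, by simp⟩
  have h₃ : ((0, 1) : ℤ × ℤ) ∈ latticeBox N := mem_latticeBox.2 ⟨by simp, by simp, by simpa⟩
  have h₄ : ((0, -1) : ℤ × ℤ) ∈ latticeBox N := mem_latticeBox.2 ⟨by simp, by simp, by simpa⟩
  classical
  refine ⟨Pi.single ⟨_, h₁⟩ a⁺ + Pi.single ⟨_, h₂⟩ a⁻ + Pi.single ⟨_, h₃⟩ b⁺ +
    Pi.single ⟨_, h₄⟩ b⁻, ⟨?_, ?_⟩, ?_⟩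
  · exact add_nonneg (add_nonneg (add_nonneg (Pi.single_nonneg.2 (posPart_nonneg a))
      (Pi.single_nonneg.2 (negPart_nonneg a))) (Pi.single_nonneg.2 (posPart_nonneg b)))
      (Pi.single_nonneg.2 (negPart_nonneg b))
  · simp only [Pi.add_apply, add_smul, sum_add_distrib, sum_pi_single_smul]
    simp [boxPoint, latticePoint]
    conv_rhs => rw [← posPart_sub_negPart a, ← posPart_sub_negPart b]
    module
  · intro ψ
    simp only [← smul_eq_mul]
    simp only [Pi.add_apply, add_smul, sum_add_distrib, sum_pi_single_smul]
    simp [boxPoint, latticePoint]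

theorem boxPoint_mem_lattice (i : latticeBox N) : boxPoint b₁ b₂ N i ∈ lattice b₁ b₂ :=
  ⟨_, _, rfl⟩

theorem boxPoint_ne_zero (hli : LinearIndependent ℝ ![b₁, b₂]) (i : latticeBox N) :
    boxPoint b₁ b₂ N i ≠ 0 := by
  intro h
  obtain ⟨h₁, h₂⟩ := LinearIndependent.pair_iff.1 hli _ _ h
  exact (mem_latticeBox.1 i.2).1 (Prod.ext (by exact_mod_cast h₁) (by exact_mod_cast h₂))

theorem nonnegCombinations_boxPoint_nonempty (hN : 1 ≤ N)
    (hli : LinearIndependent ℝ ![b₁, b₂]) (ξ : Fin 2 → ℝ) :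
    (nonnegCombinations (boxPoint b₁ b₂ N) ξ).Nonempty := by
  have hspan : Submodule.span ℝ (Set.range ![b₁, b₂]) = ⊤ :=
    hli.span_eq_top_of_card_eq_finrank' (by simp)
  have hξ : ξ ∈ Submodule.span ℝ (Set.range ![b₁, b₂]) := hspan ▸ Submodule.mem_top
  obtain ⟨c, rfl⟩ := (Submodule.mem_span_range_iff_exists_fun ℝ).1 hξ
  obtain ⟨μ, hμ, -⟩ := exists_unit_combination (b₁ := b₁) (b₂ := b₂) hN (c 0) (c 1)
  exact ⟨μ, by simpa [Fin.sum_univ_two] using hμ⟩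

theorem exists_latticeBox_combination_le (hN : 1 ≤ N) {K : ℝ}
    (hK : ψ b₁ ≤ K ∧ ψ (-b₁) ≤ K ∧ ψ b₂ ≤ K ∧ ψ (-b₂) ≤ K)
    (hlarge : ∀ p ∉ latticeBox N, (|(p.1 : ℝ)| + |(p.2 : ℝ)|) * K ≤ ψ (latticePoint b₁ b₂ p))
    {v : Fin 2 → ℝ} (hv : v ∈ lattice b₁ b₂) :
    ∃ μ ∈ nonnegCombinations (boxPoint b₁ b₂ N) v, ∑ i, μ i * ψ (boxPoint b₁ b₂ N i) ≤ ψ v := by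
  classical
  obtain ⟨m, n, rfl⟩ := hv
  by_cases hp : (m, n) ∈ latticeBox N
  · refine ⟨Pi.single ⟨_, hp⟩ 1, ⟨Pi.single_nonneg.2 zero_le_one, ?_⟩, ?_⟩
    · rw [sum_pi_single_smul, one_smul]
      rfl
    · simp only [← smul_eq_mul]
      rw [sum_pi_single_smul, one_smul]
      rfl
  obtain ⟨μ, hμ, hμψ⟩ := exists_unit_combination hN m n
  refine ⟨μ, hμ, ?_⟩
  obtain ⟨hK₁, hK₁', hK₂, hK₂'⟩ := hK
  calc ∑ i, μ i * ψ (boxPoint b₁ b₂ N i)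
      ≤ (m : ℝ)⁺ * K + (m : ℝ)⁻ * K + (n : ℝ)⁺ * K + (n : ℝ)⁻ * K := by
        rw [hμψ ψ]
        gcongr
    _ = (|(m : ℝ)| + |(n : ℝ)|) * K := by
        rw [← posPart_add_negPart (m : ℝ), ← posPart_add_negPart (n : ℝ)]; ring
    _ ≤ ψ (latticePoint b₁ b₂ (m, n)) := hlarge _ hp

theorem exists_pos_mul_norm_sq_le_of_linearIndependent (hcont : Continuous ψ)
    (hhom : ∀ (l : ℝ) (ξ : Fin 2 → ℝ), 0 ≤ l → ψ (l • ξ) = l ^ 2 * ψ ξ)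
    (hpos : ∀ ξ : Fin 2 → ℝ, ξ ≠ 0 → 0 < ψ ξ) (hli : LinearIndependent ℝ ![b₁, b₂]) :
    ∃ κ > 0, ∀ c : ℝ × ℝ, κ * ‖c‖ ^ 2 ≤ ψ (c.1 • b₁ + c.2 • b₂) := by
  refine exists_pos_mul_norm_sq_le (hcont.comp (by fun_prop)) (fun l c hl => ?_)
    (fun c hc => hpos _ fun h => hc (Prod.ext_iff.2 (LinearIndependent.pair_iff.1 hli _ _ h)))
  simpa only [Function.comp_apply, Prod.smul_fst, Prod.smul_snd, smul_eq_mul, mul_smul, smul_add]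
    using hhom l (c.1 • b₁ + c.2 • b₂) hl

theorem exists_latticeBox_reduction (hcont : Continuous ψ) (hnonneg : ∀ ξ, 0 ≤ ψ ξ)
    (hhom : ∀ (l : ℝ) (ξ : Fin 2 → ℝ), 0 ≤ l → ψ (l • ξ) = l ^ 2 * ψ ξ)
    (hpos : ∀ ξ : Fin 2 → ℝ, ξ ≠ 0 → 0 < ψ ξ) (hli : LinearIndependent ℝ ![b₁, b₂]) :
    ∃ N : ℕ, 1 ≤ N ∧ ∀ v ∈ lattice b₁ b₂, ∃ μ ∈ nonnegCombinations (boxPoint b₁ b₂ N) v,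
      ∑ i, μ i * ψ (boxPoint b₁ b₂ N i) ≤ ψ v := by
  obtain ⟨κ, hκ, hcoer⟩ := exists_pos_mul_norm_sq_le_of_linearIndependent hcont hhom hpos hli
  set K := max (max (ψ b₁) (ψ (-b₁))) (max (ψ b₂) (ψ (-b₂)))
  have hK0 : 0 ≤ K := (hnonneg b₁).trans (le_max_of_le_left (le_max_left _ _))
  set N := max 1 ⌈2 * K / κ⌉₊
  refine ⟨N, le_max_left _ _, fun v hv => exists_latticeBox_combination_le (le_max_left _ _)
    ⟨le_max_of_le_left (le_max_left _ _), le_max_of_le_left (le_max_right _ _),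
      le_max_of_le_right (le_max_left _ _), le_max_of_le_right (le_max_right _ _)⟩
    (fun p hp => ?_) hv⟩
  rcases eq_or_ne p 0 with rfl | hp0
  · simpa [latticePoint] using hnonneg 0
  set c : ℝ × ℝ := ((p.1 : ℝ), (p.2 : ℝ))
  have hc : (N : ℝ) < ‖c‖ := by
    have hp' : ¬(|p.1| ≤ N ∧ |p.2| ≤ N) := fun h => hp (mem_latticeBox.2 ⟨hp0, h⟩)
    simp only [c, Prod.norm_def, Real.norm_eq_abs, lt_max_iff]
    rcases not_and_or.1 hp' with h | h
    · left; exact_mod_cast not_le.1 h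
    · right; exact_mod_cast not_le.1 h
  have h2K : 2 * K ≤ κ * ‖c‖ := by
    have : 2 * K / κ ≤ N := (Nat.le_ceil _).trans (by exact_mod_cast le_max_right _ _)
    rw [div_le_iff₀ hκ] at this
    nlinarith
  calc (|(p.1 : ℝ)| + |(p.2 : ℝ)|) * K ≤ (2 * ‖c‖) * K := by
        gcongr
        have h₁ : |(p.1 : ℝ)| ≤ ‖c‖ := norm_fst_le c
        have h₂ : |(p.2 : ℝ)| ≤ ‖c‖ := norm_snd_le c
        linarith
    _ ≤ κ * ‖c‖ ^ 2 := by nlinarith [norm_nonneg c]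
    _ ≤ ψ (latticePoint b₁ b₂ p) := hcoer c

theorem sum_mul_mem_decompVals {ι : Type*} [Fintype ι] {v : ι → Fin 2 → ℝ}
    (hv : ∀ i, v i ∈ lattice b₁ b₂) {ξ : Fin 2 → ℝ} {μ : ι → ℝ}
    (hμ : μ ∈ nonnegCombinations v ξ) : ∑ i, μ i * ψ (v i) ∈ decompVals ψ b₁ b₂ ξ := by
  let e := (Fintype.equivFin ι).symm
  exact ⟨_, μ ∘ e, v ∘ e, fun k => hμ.1 _, fun k => hv _,
    (e.sum_comp fun i => μ i • v i).trans hμ.2, (e.sum_comp fun i => μ i * ψ (v i)).symm⟩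

end Box

theorem stmt5_general (ψ : (Fin 2 → ℝ) → ℝ)
    (hcont : Continuous ψ)
    (hnonneg : ∀ ξ, 0 ≤ ψ ξ)
    (hhom : ∀ (l : ℝ) (ξ : Fin 2 → ℝ), 0 ≤ l → ψ (l • ξ) = l ^ 2 * ψ ξ)
    (hpos : ∀ ξ : Fin 2 → ℝ, ξ ≠ 0 → 0 < ψ ξ)
    (b₁ b₂ : Fin 2 → ℝ) (hli : LinearIndependent ℝ ![b₁, b₂])
    (ξ : Fin 2 → ℝ) :
    sInf (decompVals ψ b₁ b₂ ξ) ∈ decompVals ψ b₁ b₂ ξ := by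
  obtain ⟨N, hN, hreduce⟩ := exists_latticeBox_reduction hcont hnonneg hhom hpos hli
  obtain ⟨μ₀, hμ₀, hmin⟩ := exists_isMinOn_nonnegCombinations (boxPoint b₁ b₂ N)
    (fun i => hpos _ (boxPoint_ne_zero hli i)) (nonnegCombinations_boxPoint_nonempty hN hli ξ)
  refine IsLeast.csInf_mem ⟨sum_mul_mem_decompVals boxPoint_mem_lattice hμ₀, ?_⟩
  rintro _ ⟨M, lam, v, hlam, hv, rfl, rfl⟩
  obtain ⟨μ, hμ, hμψ⟩ := exists_nonnegCombinations_sum_le hreduce hlam hv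
  exact (isMinOn_iff.1 hmin μ hμ).trans hμψ

/-- the infimum in the definition of the relaxed self-energy density `φ`
is attained. -/
theorem stmt5 (ψ : (Fin 2 → ℝ) → ℝ)
    (hcont : Continuous ψ) (hconv : ConvexOn ℝ Set.univ ψ)
    (hnonneg : ∀ ξ, 0 ≤ ψ ξ)
    (hhom : ∀ (l : ℝ) (ξ : Fin 2 → ℝ), 0 ≤ l → ψ (l • ξ) = l ^ 2 * ψ ξ)
    (hpos : ∀ ξ : Fin 2 → ℝ, ξ ≠ 0 → 0 < ψ ξ)
    (b₁ b₂ : Fin 2 → ℝ) (hli : LinearIndependent ℝ ![b₁, b₂])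
    (ξ : Fin 2 → ℝ) :
    sInf (decompVals ψ b₁ b₂ ξ) ∈ decompVals ψ b₁ b₂ ξ :=
  stmt5_general ψ hcont hnonneg hhom hpos b₁ b₂ hli ξ

end
end

section
/- Let c > 1, s ∈ ℕ, and suppose β is an L² matrix field on a ball B of radius c^s R₀, curl-free outside a family of disjoint sub-balls, such that there exist integers 0 ≤ n₁ < … < n_L ≤ s−1 with L ≥ ⌊s/2⌋ and, for each k, disjoint annuli C_{k,m} = B_m(n_k+1) \ B_m(n_k) ⊆ B (each with radius ratio c, with curl β = 0 on C_{k,m}) such that Σ_m circulation of β around ∂B_m(n_k) (summed over the annuli at level k) equals the fixed vector ξ ∈ ℝ². If each individual circulation lies in a lattice 𝕊 whose nonzero elements satisfy |η| ≥ κ > 0, and 𝒞 satisfies l|F_sym|² ≤ 𝒞F:F, then ∫_B 𝒞β:β dx ≥ (κ log c / (2π K(c))) ⌊s/2⌋ |ξ|, where K(c) is Korn's constant of an annulus with radius ratio c. -/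
open MeasureTheory Real

noncomputable section

/-- The open annulus `B_R(x₀) \ B_r(x₀)`. -/
def annulusC (x₀ : Fin 2 → ℝ) (r R : ℝ) : Set (Fin 2 → ℝ) :=
  {x | r ^ 2 < (x 0 - x₀ 0) ^ 2 + (x 1 - x₀ 1) ^ 2 ∧
       (x 0 - x₀ 0) ^ 2 + (x 1 - x₀ 1) ^ 2 < R ^ 2}

/-- The closed annulus. -/
def closedAnnulusC (x₀ : Fin 2 → ℝ) (r R : ℝ) : Set (Fin 2 → ℝ) :=
  {x | r ^ 2 ≤ (x 0 - x₀ 0) ^ 2 + (x 1 - x₀ 1) ^ 2 ∧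
       (x 0 - x₀ 0) ^ 2 + (x 1 - x₀ 1) ^ 2 ≤ R ^ 2}

/-- Row-wise distributional curl of a matrix field vanishes on `U`. -/
def CurlFreeOn (β : (Fin 2 → ℝ) → Matrix (Fin 2) (Fin 2) ℝ) (U : Set (Fin 2 → ℝ)) : Prop :=
  ∀ φ : (Fin 2 → ℝ) → ℝ, ContDiff ℝ (⊤ : ℕ∞) φ → HasCompactSupport φ → tsupport φ ⊆ U →
    ∀ i : Fin 2,
      ∫ x, (β x i 1 * fderiv ℝ φ x (Pi.single 0 1) -
            β x i 0 * fderiv ℝ φ x (Pi.single 1 1)) = 0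

/-- The circulation `∫_{∂B_r(x₀)} β · τ dH¹`. -/
def circulationC (x₀ : Fin 2 → ℝ) (β : (Fin 2 → ℝ) → Matrix (Fin 2) (Fin 2) ℝ) (r : ℝ) :
    Fin 2 → ℝ :=
  fun i => ∫ θ in (0:ℝ)..(2 * π),
    (β (x₀ + ![r * Real.cos θ, r * Real.sin θ]) i 0 * (-(r * Real.sin θ)) +
     β (x₀ + ![r * Real.cos θ, r * Real.sin θ]) i 1 * (r * Real.cos θ))

/-- Euclidean norm of a vector in the plane. -/
def enorm2 (v : Fin 2 → ℝ) : ℝ := Real.sqrt (v 0 ^ 2 + v 1 ^ 2)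


lemma enorm2_eq_norm (v : Fin 2 → ℝ) :
    enorm2 v = ‖(WithLp.equiv 2 (Fin 2 → ℝ)).symm v‖ := by
  rw [EuclideanSpace.norm_eq]
  simp [enorm2, Fin.sum_univ_two, sq_abs]

lemma enorm2_sum_le {n : ℕ} (g : Fin n → Fin 2 → ℝ) :
    enorm2 (∑ m, g m) ≤ ∑ m, enorm2 (g m) := by
  simp only [enorm2_eq_norm]
  have h : (WithLp.equiv 2 (Fin 2 → ℝ)).symm (∑ m, g m)
      = ∑ m, (WithLp.equiv 2 (Fin 2 → ℝ)).symm (g m) := by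
    simp only [WithLp.equiv_symm_apply, WithLp.toLp_sum]
  rw [h]
  exact norm_sum_le _ _

/-- if along `L ≥ ⌊s/2⌋` levels there are disjoint annuli of radius ratio `c`
contained in `B`, on which `β` is curl-free, whose circulations lie in a lattice `𝕊`
(nonzero elements of norm `≥ κ`) and sum, on each level, to the fixed vector `ξ`, then
`∫_B 𝒞β:β ≥ (κ log c/(2π K(c))) ⌊s/2⌋ |ξ|`, `K(c)` being Korn's constant of an annulus of
ratio `c` (expressed through the annulus energy lower bound it yields). -/
theorem stmt15
    (𝒞 : Matrix (Fin 2) (Fin 2) ℝ →ₗ[ℝ] Matrix (Fin 2) (Fin 2) ℝ)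
    (l : ℝ) (hl : 0 < l)
    (hcoer : ∀ F : Matrix (Fin 2) (Fin 2) ℝ,
      l * (∑ i : Fin 2, ∑ j : Fin 2, ((F i j + F j i) / 2) ^ 2) ≤
        ∑ i : Fin 2, ∑ j : Fin 2, 𝒞 F i j * F i j)
    (c : ℝ) (hc : 1 < c) (K : ℝ) (hK : 0 < K)
    (hKorn : ∀ (x₀ : Fin 2 → ℝ) (ρ : ℝ), 0 < ρ →
      ∀ β' : (Fin 2 → ℝ) → Matrix (Fin 2) (Fin 2) ℝ,
        ContinuousOn β' (closedAnnulusC x₀ ρ (c * ρ)) →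
        CurlFreeOn β' (annulusC x₀ ρ (c * ρ)) →
        IntegrableOn (fun x => ∑ i : Fin 2, ∑ j : Fin 2, (β' x i j) ^ 2)
          (annulusC x₀ ρ (c * ρ)) volume →
        (∫ x in annulusC x₀ ρ (c * ρ), ∑ i : Fin 2, ∑ j : Fin 2, 𝒞 (β' x) i j * β' x i j) ≥
          (Real.log c / (2 * π * K)) * ∑ i : Fin 2, (circulationC x₀ β' ρ i) ^ 2)
    (b₁ b₂ : Fin 2 → ℝ) (κ : ℝ) (hκ : 0 < κ)
    (hlat : ∀ v ∈ lattice b₁ b₂, v ≠ 0 → κ ≤ enorm2 v)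
    (B : Set (Fin 2 → ℝ)) (s L : ℕ) (hL : s / 2 ≤ L)
    (M : Fin L → ℕ)
    (cen : (k : Fin L) → Fin (M k) → (Fin 2 → ℝ))
    (rad : (k : Fin L) → Fin (M k) → ℝ)
    (hrad : ∀ k m, 0 < rad k m)
    (hsub : ∀ k m, annulusC (cen k m) (rad k m) (c * rad k m) ⊆ B)
    (hdisj : ∀ k m k' m', (⟨k, m⟩ : Σ k : Fin L, Fin (M k)) ≠ ⟨k', m'⟩ →
      Disjoint (annulusC (cen k m) (rad k m) (c * rad k m))
               (annulusC (cen k' m') (rad k' m') (c * rad k' m')))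
    (β : (Fin 2 → ℝ) → Matrix (Fin 2) (Fin 2) ℝ)
    (hcont : ∀ k m, ContinuousOn β (closedAnnulusC (cen k m) (rad k m) (c * rad k m)))
    (hcurl : ∀ k m, CurlFreeOn β (annulusC (cen k m) (rad k m) (c * rad k m)))
    (hL2 : ∀ k m, IntegrableOn (fun x => ∑ i : Fin 2, ∑ j : Fin 2, (β x i j) ^ 2)
      (annulusC (cen k m) (rad k m) (c * rad k m)) volume)
    (hBmeas : MeasurableSet B)
    (hBint : IntegrableOn (fun x => ∑ i : Fin 2, ∑ j : Fin 2, 𝒞 (β x) i j * β x i j) B volume)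
    (ξ : Fin 2 → ℝ)
    (hcircLat : ∀ k m, circulationC (cen k m) β (rad k m) ∈ lattice b₁ b₂)
    (hsum : ∀ (k : Fin L) (i : Fin 2),
      (∑ m : Fin (M k), circulationC (cen k m) β (rad k m) i) = ξ i) :
    (∫ x in B, ∑ i : Fin 2, ∑ j : Fin 2, 𝒞 (β x) i j * β x i j) ≥
      (κ * Real.log c / (2 * π * K)) * ((s / 2 : ℕ) : ℝ) * enorm2 ξ := by

  classical
  set f : (Fin 2 → ℝ) → ℝ := fun x => ∑ i : Fin 2, ∑ j : Fin 2, 𝒞 (β x) i j * β x i j with hf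
  have hfnn : ∀ x, 0 ≤ f x := fun x =>
    le_trans (mul_nonneg hl.le (by positivity)) (hcoer (β x))
  set A : (Σ k : Fin L, Fin (M k)) → Set (Fin 2 → ℝ) :=
    fun p => annulusC (cen p.1 p.2) (rad p.1 p.2) (c * rad p.1 p.2) with hA
  have hAopen : ∀ p, IsOpen (A p) := by
    intro p
    have h : A p = (fun x : Fin 2 → ℝ =>
        (x 0 - cen p.1 p.2 0) ^ 2 + (x 1 - cen p.1 p.2 1) ^ 2) ⁻¹'
        (Set.Ioo ((rad p.1 p.2) ^ 2) ((c * rad p.1 p.2) ^ 2)) := rfl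
    rw [h]
    exact IsOpen.preimage (by fun_prop) isOpen_Ioo
  have hAmeas : ∀ p, MeasurableSet (A p) := fun p => (hAopen p).measurableSet
  have hsubU : (⋃ p, A p) ⊆ B := Set.iUnion_subset fun p => hsub p.1 p.2
  have hpair : Pairwise (Function.onFun Disjoint A) := by
    intro p q hpq
    exact hdisj p.1 p.2 q.1 q.2 (by simpa using hpq)
  have hIntU : IntegrableOn f (⋃ p, A p) volume := hBint.mono_set hsubU
  have hstep1 : ∫ x in ⋃ p, A p, f x ≤ ∫ x in B, f x :=
    setIntegral_mono_set hBint (ae_of_all _ hfnn) (HasSubset.Subset.eventuallyLE hsubU)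
  have hstep2 : ∫ x in ⋃ p, A p, f x = ∑ p, ∫ x in A p, f x := by
    rw [integral_iUnion hAmeas hpair hIntU, tsum_fintype]
  have hC : 0 ≤ Real.log c / (2 * π * K) :=
    div_nonneg (Real.log_nonneg hc.le) (by positivity)
  have hann : ∀ k m, (Real.log c / (2 * π * K)) *
      (κ * enorm2 (circulationC (cen k m) β (rad k m))) ≤ ∫ x in A ⟨k, m⟩, f x := by
    intro k m
    have h1 := hKorn (cen k m) (rad k m) (hrad k m) β (hcont k m) (hcurl k m) (hL2 k m)
    set v := circulationC (cen k m) β (rad k m) with hv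
    have h2 : κ * enorm2 v ≤ ∑ i : Fin 2, v i ^ 2 := by
      rw [Fin.sum_univ_two]
      rcases eq_or_ne v 0 with h0 | h0
      · simp [h0, enorm2]
      · have hκv := hlat v (hcircLat k m) h0
        calc κ * enorm2 v ≤ enorm2 v * enorm2 v :=
              mul_le_mul_of_nonneg_right hκv (Real.sqrt_nonneg _)
          _ = v 0 ^ 2 + v 1 ^ 2 := by
              rw [← sq]; exact Real.sq_sqrt (by positivity)
    calc (Real.log c / (2 * π * K)) * (κ * enorm2 v)
        ≤ (Real.log c / (2 * π * K)) * ∑ i : Fin 2, v i ^ 2 :=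
          mul_le_mul_of_nonneg_left h2 hC
      _ ≤ ∫ x in A ⟨k, m⟩, f x := h1
  have hlev : ∀ k : Fin L, (Real.log c / (2 * π * K)) * (κ * enorm2 ξ) ≤
      ∑ m, ∫ x in A ⟨k, m⟩, f x := by
    intro k
    have hξ : ξ = ∑ m : Fin (M k), circulationC (cen k m) β (rad k m) := by
      funext i
      rw [← hsum k i]
      simp [Finset.sum_apply]
    have htri : enorm2 ξ ≤ ∑ m, enorm2 (circulationC (cen k m) β (rad k m)) := by
      rw [hξ]; exact enorm2_sum_le _
    calc (Real.log c / (2 * π * K)) * (κ * enorm2 ξ)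
        ≤ (Real.log c / (2 * π * K)) *
            (κ * ∑ m, enorm2 (circulationC (cen k m) β (rad k m))) :=
          mul_le_mul_of_nonneg_left (mul_le_mul_of_nonneg_left htri hκ.le) hC
      _ = ∑ m, (Real.log c / (2 * π * K)) *
            (κ * enorm2 (circulationC (cen k m) β (rad k m))) := by
          rw [Finset.mul_sum, Finset.mul_sum]
      _ ≤ ∑ m, ∫ x in A ⟨k, m⟩, f x := Finset.sum_le_sum fun m _ => hann k m
  have hsum' : (L : ℝ) * ((Real.log c / (2 * π * K)) * (κ * enorm2 ξ)) ≤
      ∑ p : Σ k : Fin L, Fin (M k), ∫ x in A p, f x := by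
    rw [← Finset.univ_sigma_univ, Finset.sum_sigma]
    calc (L : ℝ) * ((Real.log c / (2 * π * K)) * (κ * enorm2 ξ))
        = ∑ _k : Fin L, (Real.log c / (2 * π * K)) * (κ * enorm2 ξ) := by
          simp [Finset.sum_const, nsmul_eq_mul]
      _ ≤ ∑ k : Fin L, ∑ m, ∫ x in A ⟨k, m⟩, f x := Finset.sum_le_sum fun k _ => hlev k
  have hLc : ((s / 2 : ℕ) : ℝ) ≤ (L : ℝ) := Nat.cast_le.mpr hL
  have hpos : 0 ≤ (Real.log c / (2 * π * K)) * (κ * enorm2 ξ) :=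
    mul_nonneg hC (mul_nonneg hκ.le (Real.sqrt_nonneg _))
  have hfinal : ((s / 2 : ℕ) : ℝ) * ((Real.log c / (2 * π * K)) * (κ * enorm2 ξ)) ≤
      ∫ x in B, f x := by
    calc ((s / 2 : ℕ) : ℝ) * ((Real.log c / (2 * π * K)) * (κ * enorm2 ξ))
        ≤ (L : ℝ) * ((Real.log c / (2 * π * K)) * (κ * enorm2 ξ)) :=
          mul_le_mul_of_nonneg_right hLc hpos
      _ ≤ ∑ p : Σ k : Fin L, Fin (M k), ∫ x in A p, f x := hsum'
      _ = ∫ x in ⋃ p, A p, f x := hstep2.symm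
      _ ≤ ∫ x in B, f x := hstep1
  have heq : (κ * Real.log c / (2 * π * K)) * ((s / 2 : ℕ) : ℝ) * enorm2 ξ =
      ((s / 2 : ℕ) : ℝ) * ((Real.log c / (2 * π * K)) * (κ * enorm2 ξ)) := by ring
  rw [ge_iff_le, heq]
  exact hfinal


end
end
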